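/- Let M ⊆ X and N ⊆ Y be closed subspaces of Banach spaces X, Y over 𝕜 (𝕜 = ℝ or ℂ). If every bounded bilinear form φ : M × N → 𝕜 admits a bounded bilinear extension φ̂ : X × Y → 𝕜 with ‖φ̂‖ = ‖φ‖, then for every F in the algebraic tensor product M ⊗ N, the projective norm of F computed in M ⊗ N equals the projective norm of its canonical image in X ⊗ Y: ‖F‖_{π, M⊗N} = ‖ι(F)‖_{π, X⊗Y}, where ι : M ⊗ N → X ⊗ Y is induced by the inclusions. -/

import Mathlib

/-- The canonical operator-norm group structure on `N →L[𝕜] Z` for a submodule `N`;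
this is definitionally the canonical Mathlib instance, registered to help instance search. -/
noncomputable instance instCLMNormedAddCommGroupOfSubmodule {𝕜 : Type*} [RCLike 𝕜] {Y Z : Type*}
    [NormedAddCommGroup Y] [NormedSpace 𝕜 Y]
    [NormedAddCommGroup Z] [NormedSpace 𝕜 Z] (N : Submodule 𝕜 Y) :
    NormedAddCommGroup (↥N →L[𝕜] Z) := inferInstance

/-- The canonical normed-space structure on `N →L[𝕜] Z` for a submodule `N`;
this is definitionally the canonical Mathlib instance, registered to help instance search. -/
noncomputable instance instCLMNormedSpaceOfSubmodule {𝕜 : Type*} [RCLike 𝕜] {Y Z : Type*}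
    [NormedAddCommGroup Y] [NormedSpace 𝕜 Y]
    [NormedAddCommGroup Z] [NormedSpace 𝕜 Z] (N : Submodule 𝕜 Y) :
    NormedSpace 𝕜 (↥N →L[𝕜] Z) := inferInstance

/-- The projective norm of an element `F` of the algebraic tensor product `X ⊗ Y` of two
normed spaces: the infimum of `Σᵢ ‖xᵢ‖·‖yᵢ‖` over all finite representations
`F = Σᵢ xᵢ ⊗ yᵢ`. -/
noncomputable def projNorm (𝕜 : Type*) [RCLike 𝕜] {X Y : Type*}
    [NormedAddCommGroup X] [NormedSpace 𝕜 X]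
    [NormedAddCommGroup Y] [NormedSpace 𝕜 Y]
    (F : TensorProduct 𝕜 X Y) : ℝ :=
  sInf {r : ℝ | ∃ (n : ℕ) (x : Fin n → X) (y : Fin n → Y),
    F = ∑ i, x i ⊗ₜ[𝕜] y i ∧ r = ∑ i, ‖x i‖ * ‖y i‖}

/-!
By Hahn–Banach applied to the projective seminorm, `‖F‖_π` is attained as `|φ F|` for a bilinear
form `φ` on `M × N` with `‖φ‖ ≤ 1`. A norm-preserving extension `φ̂` of `φ` still has `‖φ̂‖ ≤ 1` and
takes the same value on `ι F`, so `‖F‖_π ≤ ‖ι F‖_π`. Conversely, every representation of `F` maps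
under `ι` to a representation of `ι F` of the same cost.
-/

open TensorProduct

theorem Seminorm.exists_dual_le_eq {𝕜 E : Type*} [RCLike 𝕜] [AddCommGroup E] [Module 𝕜 E]
    (p : Seminorm 𝕜 E) (x : E) : ∃ g : Module.Dual 𝕜 E, (∀ y, ‖g y‖ ≤ p y) ∧ g x = p x := by
  let := p.toAddGroupSeminorm.toSeminormedAddCommGroup
  let : NormedSpace 𝕜 E := ⟨fun c y => (map_smul_eq_mul p c y).le⟩
  obtain ⟨g, hg, hgx⟩ := exists_dual_vector'' 𝕜 x
  exact ⟨g.toLinearMap, fun y => (g.le_opNorm y).trans (mul_le_of_le_one_left (norm_nonneg y) hg),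
    hgx⟩

section ProjNorm

variable {𝕜 : Type*} [RCLike 𝕜] {X Y : Type*}
  [NormedAddCommGroup X] [NormedSpace 𝕜 X] [NormedAddCommGroup Y] [NormedSpace 𝕜 Y]

theorem projNorm_le_sum {F : X ⊗[𝕜] Y} {n : ℕ} (x : Fin n → X) (y : Fin n → Y)
    (hF : F = ∑ i, x i ⊗ₜ[𝕜] y i) : projNorm 𝕜 F ≤ ∑ i, ‖x i‖ * ‖y i‖ :=
  csInf_le ⟨0, by rintro _ ⟨n, x, y, -, rfl⟩; positivity⟩ ⟨n, x, y, hF, rfl⟩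

theorem le_mul_projNorm_of_forall {F : X ⊗[𝕜] Y} {a c : ℝ} (hc : 0 ≤ c)
    (h : ∀ (n : ℕ) (x : Fin n → X) (y : Fin n → Y), F = ∑ i, x i ⊗ₜ[𝕜] y i →
      a ≤ c * ∑ i, ‖x i‖ * ‖y i‖) :
    a ≤ c * projNorm 𝕜 F := by
  obtain ⟨n, x, y, hF⟩ := exists_sum_tmul_eq F
  rcases hc.eq_or_lt with rfl | hc
  · simpa using h n x y hF
  rw [← div_le_iff₀' hc]
  refine le_csInf ⟨_, n, x, y, hF, rfl⟩ ?_
  rintro _ ⟨m, x', y', hF', rfl⟩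
  exact (div_le_iff₀' hc).2 (h m x' y' hF')

theorem projNorm_nonneg (F : X ⊗[𝕜] Y) : 0 ≤ projNorm 𝕜 F := by
  simpa using le_mul_projNorm_of_forall (F := F) zero_le_one fun n x y _ => by positivity

theorem projNorm_zero : projNorm 𝕜 (0 : X ⊗[𝕜] Y) = 0 :=
  le_antisymm (by simpa using projNorm_le_sum (F := (0 : X ⊗[𝕜] Y)) ![] ![] (by simp))
    (projNorm_nonneg 0)

theorem projNorm_tmul_le (x : X) (y : Y) : projNorm 𝕜 (x ⊗ₜ[𝕜] y) ≤ ‖x‖ * ‖y‖ := by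
  simpa using projNorm_le_sum ![x] ![y] (by simp)

theorem projNorm_add_le (F G : X ⊗[𝕜] Y) : projNorm 𝕜 (F + G) ≤ projNorm 𝕜 F + projNorm 𝕜 G := by
  have hsub : projNorm 𝕜 (F + G) - projNorm 𝕜 G ≤ 1 * projNorm 𝕜 F := by
    refine le_mul_projNorm_of_forall zero_le_one fun n x y hF => ?_
    rw [one_mul, sub_le_comm, ← one_mul (projNorm 𝕜 G)]
    refine le_mul_projNorm_of_forall zero_le_one fun m x' y' hG => ?_
    have hrep := projNorm_le_sum (F := F + G) (Fin.append x x') (Fin.append y y')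
      (by simp [Fin.sum_univ_add, hF, hG])
    simp only [Fin.sum_univ_add, Fin.append_left, Fin.append_right] at hrep
    linarith
  linarith

theorem projNorm_smul_le (c : 𝕜) (F : X ⊗[𝕜] Y) : projNorm 𝕜 (c • F) ≤ ‖c‖ * projNorm 𝕜 F := by
  refine le_mul_projNorm_of_forall (norm_nonneg c) fun n x y hF => ?_
  refine (projNorm_le_sum (fun i => c • x i) y ?_).trans_eq ?_
  · simp [hF, Finset.smul_sum, smul_tmul']
  · simp [norm_smul, Finset.mul_sum, mul_assoc]

noncomputable def projSeminorm : Seminorm 𝕜 (X ⊗[𝕜] Y) :=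
  Seminorm.ofSMulLE (projNorm 𝕜) projNorm_zero projNorm_add_le projNorm_smul_le

theorem norm_lift_le (φ : X →L[𝕜] Y →L[𝕜] 𝕜) (F : X ⊗[𝕜] Y) :
    ‖lift φ.toLinearMap₁₂ F‖ ≤ ‖φ‖ * projNorm 𝕜 F := by
  refine le_mul_projNorm_of_forall (norm_nonneg φ) ?_
  rintro n x y rfl
  calc ‖lift φ.toLinearMap₁₂ (∑ i, x i ⊗ₜ[𝕜] y i)‖ ≤ ∑ i, ‖φ (x i) (y i)‖ := by
        simpa using norm_sum_le _ _
    _ ≤ ∑ i, ‖φ‖ * (‖x i‖ * ‖y i‖) :=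
        Finset.sum_le_sum fun i _ => (φ.le_opNorm₂ (x i) (y i)).trans_eq (mul_assoc _ _ _)
    _ = ‖φ‖ * ∑ i, ‖x i‖ * ‖y i‖ := (Finset.mul_sum _ _ _).symm

theorem exists_norm_le_one_lift_eq_projNorm (F : X ⊗[𝕜] Y) :
    ∃ φ : X →L[𝕜] Y →L[𝕜] 𝕜, ‖φ‖ ≤ 1 ∧ lift φ.toLinearMap₁₂ F = projNorm 𝕜 F := by
  obtain ⟨g, hg, hgF⟩ := projSeminorm.exists_dual_le_eq F
  have hbound : ∀ x y, ‖(mk 𝕜 X Y).compr₂ g x y‖ ≤ 1 * ‖x‖ * ‖y‖ := fun x y => by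
    simpa [mul_assoc] using (hg _).trans (projNorm_tmul_le x y)
  refine ⟨_, LinearMap.mkContinuous₂_norm_le _ zero_le_one hbound, ?_⟩
  have hlift : lift (LinearMap.mkContinuous₂ _ 1 hbound).toLinearMap₁₂ = g :=
    TensorProduct.ext' fun x y => rfl
  rw [hlift, hgF]
  rfl

variable {X' Y' : Type*} [NormedAddCommGroup X'] [NormedSpace 𝕜 X']
  [NormedAddCommGroup Y'] [NormedSpace 𝕜 Y']

theorem projNorm_map_le (f : X →L[𝕜] X') (g : Y →L[𝕜] Y') (F : X ⊗[𝕜] Y) :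
    projNorm 𝕜 (map f.toLinearMap g.toLinearMap F) ≤ ‖f‖ * ‖g‖ * projNorm 𝕜 F := by
  refine le_mul_projNorm_of_forall (by positivity) ?_
  rintro n x y rfl
  refine (projNorm_le_sum (fun i => f (x i)) (fun i => g (y i)) (by simp)).trans ?_
  rw [Finset.mul_sum]
  refine Finset.sum_le_sum fun i _ => ?_
  calc ‖f (x i)‖ * ‖g (y i)‖ ≤ (‖f‖ * ‖x i‖) * (‖g‖ * ‖y i‖) := by
        gcongr
        exacts [f.le_opNorm _, g.le_opNorm _]
    _ = ‖f‖ * ‖g‖ * (‖x i‖ * ‖y i‖) := by ring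

end ProjNorm

theorem stmt_15_general {𝕜 : Type*} [RCLike 𝕜] {X Y : Type*}
    [NormedAddCommGroup X] [NormedSpace 𝕜 X]
    [NormedAddCommGroup Y] [NormedSpace 𝕜 Y]
    (M : Submodule 𝕜 X) (N : Submodule 𝕜 Y)
    (h : ∀ φ : M →L[𝕜] N →L[𝕜] 𝕜, ∃ φhat : X →L[𝕜] Y →L[𝕜] 𝕜,
      (∀ (u : M) (v : N), φhat (u : X) (v : Y) = φ u v) ∧ ‖φhat‖ = ‖φ‖)
    (F : TensorProduct 𝕜 M N) :
    projNorm 𝕜 F = projNorm 𝕜 (TensorProduct.map M.subtype N.subtype F) := by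
  refine le_antisymm ?_ ?_
  · obtain ⟨φ, hφ, hφF⟩ := exists_norm_le_one_lift_eq_projNorm F
    obtain ⟨ψ, hψφ, hψ⟩ := h φ
    have hcomp : (lift ψ.toLinearMap₁₂).comp (map M.subtype N.subtype) = lift φ.toLinearMap₁₂ :=
      TensorProduct.ext' fun u v => by simpa using hψφ u v
    have hlift := LinearMap.congr_fun hcomp F
    calc projNorm 𝕜 F = ‖lift φ.toLinearMap₁₂ F‖ := by
          rw [hφF, RCLike.norm_ofReal, abs_of_nonneg (projNorm_nonneg F)]
      _ ≤ ‖ψ‖ * projNorm 𝕜 (map M.subtype N.subtype F) := hlift ▸ norm_lift_le ψ _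
      _ ≤ projNorm 𝕜 (map M.subtype N.subtype F) :=
          mul_le_of_le_one_left (projNorm_nonneg _) (hψ.trans_le hφ)
  · calc projNorm 𝕜 (map M.subtype N.subtype F)
        ≤ ‖M.subtypeL‖ * ‖N.subtypeL‖ * projNorm 𝕜 F := projNorm_map_le M.subtypeL N.subtypeL F
      _ ≤ projNorm 𝕜 F := mul_le_of_le_one_left (projNorm_nonneg F)
          (mul_le_one₀ M.norm_subtypeL_le (norm_nonneg _) N.norm_subtypeL_le)

/-- If every bounded bilinear form on `M × N` extends to `X × Y` with the same norm, then
the projective norm on `M ⊗ N` agrees with the projective norm induced from `X ⊗ Y`. -/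
theorem stmt_15 {𝕜 : Type*} [RCLike 𝕜] {X Y : Type*}
    [NormedAddCommGroup X] [NormedSpace 𝕜 X] [CompleteSpace X]
    [NormedAddCommGroup Y] [NormedSpace 𝕜 Y] [CompleteSpace Y]
    (M : Submodule 𝕜 X) (N : Submodule 𝕜 Y)
    (hMc : IsClosed (M : Set X)) (hNc : IsClosed (N : Set Y))
    (h : ∀ φ : M →L[𝕜] N →L[𝕜] 𝕜, ∃ φhat : X →L[𝕜] Y →L[𝕜] 𝕜,
      (∀ (u : M) (v : N), φhat (u : X) (v : Y) = φ u v) ∧ ‖φhat‖ = ‖φ‖)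
    (F : TensorProduct 𝕜 M N) :
    projNorm 𝕜 F = projNorm 𝕜 (TensorProduct.map M.subtype N.subtype F) :=
  stmt_15_general M N h F
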